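/- Let A be a unital C*-algebra and μ a state on A. If a ∈ A is invertible, then σ^μ(a⁻¹) ≤ ‖a⁻¹‖² · σ^μ(a), where σ^μ(a) = max(‖a − μ(a)‖_μ, ‖a* − μ(a*)‖_μ). -/

import Mathlib

/-!
Let `[x]` be the class of `x` in the GNS space of `μ`, with semi-inner product `⟪x, y⟫ = μ(x⋆y)`,
and let `e = [1]`, a unit vector. The first half of `σ^μ(x)` is the distance from `[x]` to the
line `ℂ e`, the second half that of `[x⋆]`. Write `b = a⁻¹`. For every `λ`,
`b - λ = b (1 - λ a)`, and left multiplication by `b` has norm at most `‖b‖` on the GNS space, so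
`dist([b], ℂ e) ≤ ‖b‖ dist(e, ℂ [a])`. Both `‖[a]‖ dist(e, ℂ [a])` and `dist([a], ℂ e)` equal the
area of the parallelogram spanned by `e` and `[a]`, and `1 = ‖[b a]‖ ≤ ‖b‖ ‖[a]‖`; hence
`dist(e, ℂ [a]) ≤ ‖b‖ dist([a], ℂ e)`. The second half follows by applying this to `a⋆`.
-/

open scoped ComplexOrder InnerProductSpace

/-- The standard deviation σ^μ(a) = max(‖a − μ(a)1‖_μ, ‖a* − conj(μ(a))1‖_μ) with
respect to a state μ on a unital C*-algebra, where ‖c‖_μ = μ(c*c)^{1/2}. -/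
noncomputable def stdDev {A : Type*} [NormedRing A] [StarRing A] [CStarRing A]
    [NormedAlgebra ℂ A] [StarModule ℂ A] (μ : A →ₗ[ℂ] ℂ) (a : A) : ℝ :=
  max (Real.sqrt (μ (star (a - μ a • 1) * (a - μ a • 1))).re)
    (Real.sqrt (μ (star (star a - (starRingEnd ℂ) (μ a) • 1) *
      (star a - (starRingEnd ℂ) (μ a) • 1))).re)

section UnitVector

variable {𝕜 E : Type*} [RCLike 𝕜] [SeminormedAddCommGroup E] [InnerProductSpace 𝕜 E]
  {e : E}

theorem norm_sub_smul_sq_of_norm_eq_one (he : ‖e‖ = 1) (x : E) (c : 𝕜) :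
    ‖x - c • e‖ ^ 2 = ‖x - ⟪e, x⟫_𝕜 • e‖ ^ 2 + ‖⟪e, x⟫_𝕜 - c‖ ^ 2 := by
  have horth : ⟪x - ⟪e, x⟫_𝕜 • e, (⟪e, x⟫_𝕜 - c) • e⟫_𝕜 = 0 := by
    rw [inner_smul_right, inner_sub_left, inner_smul_left, inner_self_eq_norm_sq_to_K, he,
      ← inner_conj_symm]
    simp
  have hsplit : x - c • e = (x - ⟪e, x⟫_𝕜 • e) + (⟪e, x⟫_𝕜 - c) • e := by
    rw [sub_smul]; abel
  rw [hsplit, sq, norm_add_sq_eq_norm_sq_add_norm_sq_of_inner_eq_zero _ _ horth, norm_smul, he]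
  ring

theorem norm_sub_inner_smul_le_norm_sub_smul (he : ‖e‖ = 1) (x : E) (c : 𝕜) :
    ‖x - ⟪e, x⟫_𝕜 • e‖ ≤ ‖x - c • e‖ := by
  refine le_of_sq_le_sq ?_ (norm_nonneg _)
  rw [norm_sub_smul_sq_of_norm_eq_one he x c]
  exact le_add_of_nonneg_right (sq_nonneg _)

/-- Both sides are the area of the parallelogram spanned by `e` and `x`: the first as base `‖x‖`
times the height of `e` over `𝕜 x`, the second as base `‖e‖ = 1` times the height of `x`. -/
theorem exists_norm_mul_norm_sub_smul_le (he : ‖e‖ = 1) (x : E) :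
    ∃ c : 𝕜, ‖x‖ * ‖e - c • x‖ ≤ ‖x - ⟪e, x⟫_𝕜 • e‖ := by
  rcases (norm_nonneg x).eq_or_lt with hx | hx
  · exact ⟨0, by rw [← hx, zero_mul]; exact norm_nonneg _⟩
  set u : E := ((‖x‖⁻¹ : ℝ) : 𝕜) • x with hu_def
  have hu : ‖u‖ = 1 := by
    rw [hu_def, norm_smul, RCLike.norm_ofReal, abs_inv, abs_norm, inv_mul_cancel₀ hx.ne']
  refine ⟨⟪u, e⟫_𝕜 * ((‖x‖⁻¹ : ℝ) : 𝕜), le_of_eq ?_⟩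
  have hx_sq := norm_sub_smul_sq_of_norm_eq_one he x (0 : 𝕜)
  have he_sq := norm_sub_smul_sq_of_norm_eq_one hu e (0 : 𝕜)
  have hinner : ‖⟪u, e⟫_𝕜‖ = ‖x‖⁻¹ * ‖⟪e, x⟫_𝕜‖ := by
    rw [hu_def, inner_smul_left, norm_mul, RCLike.norm_conj, RCLike.norm_ofReal, abs_inv, abs_norm,
      norm_inner_symm]
  rw [zero_smul, sub_zero, sub_zero] at hx_sq he_sq
  rw [he, hinner] at he_sq
  field_simp at he_sq
  rw [mul_smul, ← hu_def, ← sq_eq_sq₀ (by positivity) (norm_nonneg _), mul_pow]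
  linear_combination hx_sq - he_sq

end UnitVector

namespace PositiveLinearMap

def ofNonnegStarMulSelf {R E : Type*} [Semiring R] [NonUnitalRing E] [PartialOrder E]
    [StarRing E] [StarOrderedRing E] [Module R E]
    {F : Type*} [AddCommGroup F] [PartialOrder F] [IsOrderedAddMonoid F] [Module R F]
    (f : E →ₗ[R] F) (hf : ∀ s, 0 ≤ f (star s * s)) : E →ₚ[R] F :=
  mk₀ f fun x hx => by
    rw [StarOrderedRing.nonneg_iff] at hx
    induction hx using AddSubmonoid.closure_induction with
    | mem x hx => obtain ⟨s, rfl⟩ := hx; exact hf s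
    | zero => simp
    | add x y _ _ hx hy => rw [map_add]; exact add_nonneg hx hy

variable {A : Type*} [CStarAlgebra A] [PartialOrder A] [StarOrderedRing A] (f : A →ₚ[ℂ] ℂ)

theorem norm_toPreGNS_mul_le (b x : A) : ‖f.toPreGNS (b * x)‖ ≤ ‖b‖ * ‖f.toPreGNS x‖ :=
  (f.leftMulMapPreGNS b).le_of_opNorm_le (LinearMap.mkContinuous_norm_le _ (norm_nonneg b) _) _

theorem inner_toPreGNS_one_left (x : A) : ⟪f.toPreGNS 1, f.toPreGNS x⟫_ℂ = f x := by
  simp [preGNS_inner_def]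

theorem norm_toPreGNS_one (hf : f 1 = 1) : ‖f.toPreGNS 1‖ = 1 := by
  simp [preGNS_norm_def, hf]

theorem norm_toPreGNS_sub_le_of_mul_eq_one (hf : f 1 = 1) {a b : A} (hba : b * a = 1) :
    ‖f.toPreGNS (b - f b • 1)‖ ≤ ‖b‖ ^ 2 * ‖f.toPreGNS (a - f a • 1)‖ := by
  have he := f.norm_toPreGNS_one hf
  obtain ⟨c, hc⟩ : ∃ c : ℂ, ‖f.toPreGNS a‖ * ‖f.toPreGNS 1 - c • f.toPreGNS a‖ ≤
      ‖f.toPreGNS (a - f a • 1)‖ := by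
    simpa only [map_sub, map_smul, inner_toPreGNS_one_left] using
      exists_norm_mul_norm_sub_smul_le (𝕜 := ℂ) he (f.toPreGNS a)
  have hvar : ‖f.toPreGNS (b - f b • 1)‖ ≤ ‖f.toPreGNS (b - c • 1)‖ := by
    simpa only [map_sub, map_smul, inner_toPreGNS_one_left] using
      norm_sub_inner_smul_le_norm_sub_smul he (f.toPreGNS b) c
  have hfactor : ‖f.toPreGNS (b - c • 1)‖ ≤ ‖b‖ * ‖f.toPreGNS 1 - c • f.toPreGNS a‖ := by
    have : b - c • 1 = b * (1 - c • a) := by rw [mul_sub, mul_smul_comm, hba, mul_one]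
    simpa only [this, map_sub, map_smul] using f.norm_toPreGNS_mul_le b (1 - c • a)
  have hunit : 1 ≤ ‖b‖ * ‖f.toPreGNS a‖ := by
    simpa only [hba, he] using f.norm_toPreGNS_mul_le b a
  calc ‖f.toPreGNS (b - f b • 1)‖
      ≤ ‖b‖ * ‖f.toPreGNS 1 - c • f.toPreGNS a‖ := hvar.trans hfactor
    _ ≤ ‖b‖ * (‖b‖ * ‖f.toPreGNS a‖ * ‖f.toPreGNS 1 - c • f.toPreGNS a‖) := by
        gcongr; exact le_mul_of_one_le_left (norm_nonneg _) hunit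
    _ ≤ ‖b‖ ^ 2 * ‖f.toPreGNS (a - f a • 1)‖ := by
        rw [sq, mul_assoc, mul_assoc]; gcongr

end PositiveLinearMap

/-- For a state μ on a unital C*-algebra, the standard deviation σ^μ is strongly
Leibniz: for invertible a, σ^μ(a⁻¹) ≤ ‖a⁻¹‖² σ^μ(a). -/
theorem stdDev_stronglyLeibniz {A : Type*} [NormedRing A] [StarRing A]
    [CStarRing A] [NormedAlgebra ℂ A] [StarModule ℂ A] [CompleteSpace A]
    (μ : A →ₗ[ℂ] ℂ) (hpos : ∀ a : A, 0 ≤ μ (star a * a)) (hone : μ 1 = 1)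
    (a : Aˣ) :
    stdDev μ ((a⁻¹ : Aˣ) : A) ≤ ‖((a⁻¹ : Aˣ) : A)‖ ^ 2 * stdDev μ (a : A) := by
  let _ : CStarAlgebra A := {}
  let _ := CStarAlgebra.spectralOrder A
  have := CStarAlgebra.spectralOrderedRing A
  let f := PositiveLinearMap.ofNonnegStarMulSelf μ hpos
  have hf : f 1 = 1 := hone
  -- `‖f.toPreGNS c‖` is `√(μ (c⋆c)).re` by definition.
  have hstdDev (x : A) : stdDev μ x =
      max ‖f.toPreGNS (x - f x • 1)‖ ‖f.toPreGNS (star x - f (star x) • 1)‖ := by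
    rw [map_star f]; rfl
  have hstar : star (a⁻¹ : Aˣ).val * star a.val = 1 := by rw [← star_mul, a.mul_inv, star_one]
  rw [hstdDev, hstdDev, mul_max_of_nonneg _ _ (by positivity)]
  refine max_le_max (f.norm_toPreGNS_sub_le_of_mul_eq_one hf a.inv_mul) ?_
  simpa only [norm_star] using f.norm_toPreGNS_sub_le_of_mul_eq_one hf hstar
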